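/- Let t > s > 0 be positive integers and N a positive integer. The monic Laguerre polynomials satisfy the bi-orthogonality relation ∫∫_{ℝ²} L̃_k^{N(t−1)}(y) κ_{t−s}(y−x) L̃_ℓ^{N(s−1)}(x) w_{N(s−1),1}(x) dx dy = ℓ! · [Γ(N(s−1)+ℓ+1)/Γ(N(s−1)+1)] · δ_{k,ℓ} for all integers k, ℓ ≥ 0. Equivalently, the unique monic bi-orthogonal families p_n^{(t,s)} and q_n^{(t,s)} with respect to the pairing (p,q) ↦ ∫∫ p(y) κ_{t−s}(y−x) q(x) w_{N(s−1),1}(x) dx dy are p_n^{(t,s)} = L̃_n^{N(t−1)} and q_n^{(t,s)} = L̃_n^{N(s−1)}. -/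

import Mathlib

open MeasureTheory

/-- The gamma weight `w_{a,b}(x) = b^{a+1}/Γ(a+1) · x^a e^{-bx}` for `x > 0`,
and `0` otherwise. -/
noncomputable def w (a b x : ℝ) : ℝ :=
  if 0 < x then b ^ (a + 1) / Real.Gamma (a + 1) * x ^ a * Real.exp (-(b * x)) else 0

/-- `κ_τ(x) := w_{Nτ-1,1}(x)`. -/
noncomputable def kappa (N : ℕ) (τ : ℝ) (x : ℝ) : ℝ :=
  w ((N : ℝ) * τ - 1) 1 x

/-- The monic Laguerre polynomial with index `a`:
`L̃_n^a(x) = Σ_{k=0}^n (-1)^{n-k} (n!/(n-k)!) (Γ(a+n+1)/Γ(a+k+1)) x^k/k!`. -/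
noncomputable def Lag (a : ℝ) (n : ℕ) (x : ℝ) : ℝ :=
  ∑ k ∈ Finset.range (n + 1),
    (-1 : ℝ) ^ (n - k) * ((n.factorial : ℝ) / ((n - k).factorial : ℝ))
      * (Real.Gamma (a + n + 1) / Real.Gamma (a + k + 1)) * x ^ k / (k.factorial : ℝ)

/-!
With `a = N(s-1)` and `c = N(t-s) - 1` we have `κ_{t-s} = w_{c,1}` and `b := a + c + 1 = N(t-1)`.
Since `x ^ j * w a 1 x` is a multiple of `w (a + j) 1 x` and gamma densities convolve as
`w c 1 ⋆ w (a + j) 1 = w (b + j) 1` (the Beta integral), pairing `y ^ m` with `x ^ j` gives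
`Γ(a+j+1)/Γ(a+1) · Γ(b+j+m+1)/Γ(b+j+1)`. After inserting the Laguerre coefficients, the sum
over `m` is the `k`-th finite difference of `m ↦ Γ(b+m+j+1)/Γ(b+m+1) = (b+m+1)_j`, a polynomial
of degree `j` in `m`: it vanishes for `j < k` and equals `k!` for `j = k`. The resulting double
sum is symmetric in `k` and `l`, so it vanishes unless `k = l`.
-/

open Finset Polynomial Real
open scoped Nat

theorem Polynomial.sum_range_alternating_choose_mul_eval_add {R : Type*} [CommRing R]
    (P : R[X]) {n : ℕ} (hP : P.natDegree ≤ n) (x : R) :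
    ∑ i ∈ range (n + 1), (-1) ^ (n - i) * (n.choose i : R) * P.eval (x + i)
      = n ! * P.coeff n := by
  have h := fwdDiff_iter_eq_sum_shift 1 P.eval n x
  simp only [nsmul_one, zsmul_eq_mul, Int.cast_mul, Int.cast_pow, Int.cast_neg, Int.cast_one,
    Int.cast_natCast] at h
  rw [← h]
  rcases hP.lt_or_eq with hlt | rfl
  · rw [fwdDiff_iter_eq_zero_of_degree_lt hlt, coeff_eq_zero_of_natDegree_lt hlt]
    simp
  · rw [fwdDiff_iter_degree_eq_factorial]
    simp [mul_comm]

theorem Real.Gamma_add_nat_eq_mul_ascPochhammer {x : ℝ} (hx : 0 < x) (n : ℕ) :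
    Gamma (x + n) = Gamma x * (ascPochhammer ℝ n).eval x := by
  induction n with
  | zero => simp
  | succ n ih =>
    rw [ascPochhammer_succ_eval, Nat.cast_succ, ← add_assoc, Gamma_add_one (by positivity), ih]
    ring

lemma sum_alternating_choose_mul_Gamma_div {b : ℝ} (hb : -1 < b) {j n : ℕ} (hj : j ≤ n) :
    ∑ m ∈ range (n + 1),
        (-1) ^ (n - m) * (n.choose m : ℝ) * (Gamma (b + m + j + 1) / Gamma (b + m + 1))
      = if j = n then (n ! : ℝ) else 0 := by
  have hpoch : ∀ m : ℕ, Gamma (b + m + j + 1) / Gamma (b + m + 1)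
      = (ascPochhammer ℝ j).eval (b + 1 + m) := fun m => by
    have hpos : 0 < b + 1 + m := by linarith [m.cast_nonneg (α := ℝ)]
    rw [show b + m + j + 1 = b + 1 + m + j by ring, show b + m + 1 = b + 1 + m by ring,
      Gamma_add_nat_eq_mul_ascPochhammer hpos, mul_div_cancel_left₀ _ (Gamma_pos_of_pos hpos).ne']
  simp only [hpoch]
  rw [sum_range_alternating_choose_mul_eval_add _ ((ascPochhammer_natDegree ℝ j).trans_le hj)]
  split_ifs with h
  · subst h
    have hmonic := (monic_ascPochhammer ℝ j).coeff_natDegree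
    rw [ascPochhammer_natDegree] at hmonic
    rw [hmonic, mul_one]
  · rw [coeff_eq_zero_of_natDegree_lt (by rw [ascPochhammer_natDegree]; omega), mul_zero]

/-- Up to the factor `Γ(a+l+1) Γ(b+k+1) / Γ(a+1)`, the pairing of `L̃_k^b` with `L̃_l^a`. -/
noncomputable def alternatingGammaSum (b : ℝ) (k l : ℕ) : ℝ :=
  ∑ j ∈ range (l + 1), ∑ m ∈ range (k + 1),
    ((-1) ^ (l - j) * (l.choose j : ℝ)) * ((-1) ^ (k - m) * (k.choose m : ℝ))
      * (Gamma (b + j + m + 1) / (Gamma (b + j + 1) * Gamma (b + m + 1)))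

lemma alternatingGammaSum_comm (b : ℝ) (k l : ℕ) :
    alternatingGammaSum b k l = alternatingGammaSum b l k := by
  unfold alternatingGammaSum
  rw [sum_comm]
  refine sum_congr rfl fun m _ => sum_congr rfl fun j _ => ?_
  rw [add_right_comm b]
  ring

lemma alternatingGammaSum_of_le {b : ℝ} (hb : -1 < b) {k l : ℕ} (hlk : l ≤ k) :
    alternatingGammaSum b k l = if k = l then (k ! : ℝ) / Gamma (b + k + 1) else 0 := by
  have hrow : ∀ j ∈ range (l + 1), ∑ m ∈ range (k + 1),
      ((-1) ^ (l - j) * (l.choose j : ℝ)) * ((-1) ^ (k - m) * (k.choose m : ℝ))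
        * (Gamma (b + j + m + 1) / (Gamma (b + j + 1) * Gamma (b + m + 1)))
      = (-1) ^ (l - j) * (l.choose j : ℝ) / Gamma (b + j + 1)
          * if j = k then (k ! : ℝ) else 0 := by
    intro j hj
    rw [← sum_alternating_choose_mul_Gamma_div hb ((mem_range_succ_iff.mp hj).trans hlk), mul_sum]
    refine sum_congr rfl fun m _ => ?_
    rw [add_right_comm b (j : ℝ)]
    ring
  rw [alternatingGammaSum, sum_congr rfl hrow]
  split_ifs with hkl
  · subst hkl
    simp [div_eq_inv_mul]
  · refine sum_eq_zero fun j hj => ?_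
    rw [if_neg (by have := mem_range_succ_iff.mp hj; omega), mul_zero]

lemma alternatingGammaSum_eq {b : ℝ} (hb : -1 < b) (k l : ℕ) :
    alternatingGammaSum b k l = if k = l then (k ! : ℝ) / Gamma (b + k + 1) else 0 := by
  rcases le_total l k with hlk | hkl
  · exact alternatingGammaSum_of_le hb hlk
  · rw [alternatingGammaSum_comm, alternatingGammaSum_of_le hb hkl]
    by_cases h : k = l
    · subst h; rfl
    · rw [if_neg (Ne.symm h), if_neg h]

lemma w_one_eq_indicator (a : ℝ) :
    w a 1 = (Set.Ioi 0).indicator fun x => exp (-x) * x ^ a / Gamma (a + 1) := by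
  funext x
  by_cases hx : 0 < x
  · simp only [w, if_pos hx, Set.indicator_of_mem (Set.mem_Ioi.mpr hx), one_rpow, one_mul]
    ring
  · simp [w, hx]

lemma integrable_w_one {a : ℝ} (ha : -1 < a) : Integrable (w a 1) := by
  have h := GammaIntegral_convergent (by linarith : 0 < a + 1)
  rw [add_sub_cancel_right] at h
  rw [w_one_eq_indicator, integrable_indicator_iff measurableSet_Ioi]
  exact h.div_const _

lemma integral_w_one {a : ℝ} (ha : -1 < a) : ∫ x, w a 1 x = 1 := by
  have h := Gamma_eq_integral (by linarith : 0 < a + 1)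
  rw [add_sub_cancel_right] at h
  rw [w_one_eq_indicator, integral_indicator measurableSet_Ioi, integral_div, ← h,
    div_self (Gamma_pos_of_pos (by linarith)).ne']

lemma pow_mul_w_one {a : ℝ} (ha : -1 < a) (j : ℕ) (x : ℝ) :
    x ^ j * w a 1 x = Gamma (a + j + 1) / Gamma (a + 1) * w (a + j) 1 x := by
  by_cases hx : 0 < x
  · have hpow : x ^ j * x ^ a = x ^ (a + j) := by
      rw [← rpow_natCast, ← rpow_add hx, add_comm]
    have h1 := (Gamma_pos_of_pos (by linarith : 0 < a + 1)).ne'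
    have h2 := (Gamma_pos_of_pos (by linarith [j.cast_nonneg (α := ℝ)] : 0 < a + j + 1)).ne'
    simp only [w, if_pos hx, one_rpow, one_mul]
    field_simp
    rw [← hpow]
  · simp [w, hx]

lemma integrable_pow_mul_w_one {a : ℝ} (ha : -1 < a) (j : ℕ) :
    Integrable fun x => x ^ j * w a 1 x := by
  simp_rw [pow_mul_w_one ha j]
  exact (integrable_w_one (by linarith [j.cast_nonneg (α := ℝ)])).const_mul _

lemma integral_pow_mul_w_one {a : ℝ} (ha : -1 < a) (j : ℕ) :
    ∫ x, x ^ j * w a 1 x = Gamma (a + j + 1) / Gamma (a + 1) := by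
  simp_rw [pow_mul_w_one ha j]
  rw [integral_const_mul, integral_w_one (by linarith [j.cast_nonneg (α := ℝ)]), mul_one]

lemma integral_rpow_mul_sub_rpow {a c y : ℝ} (ha : -1 < a) (hc : -1 < c) (hy : 0 < y) :
    ∫ x in 0..y, x ^ a * (y - x) ^ c
      = y ^ (a + c + 1) * (Gamma (a + 1) * Gamma (c + 1) / Gamma (a + c + 2)) := by
  apply Complex.ofReal_injective
  have hbeta := Complex.betaIntegral_scaled ((a + 1 : ℝ) : ℂ) ((c + 1 : ℝ) : ℂ) hy
  rw [Complex.betaIntegral_eq_Gamma_mul_div _ _ (by simp; linarith) (by simp; linarith)] at hbeta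
  calc ((∫ x in 0..y, x ^ a * (y - x) ^ c : ℝ) : ℂ)
      = ∫ x in 0..y,
          (x : ℂ) ^ ((a + 1 : ℝ) - 1 : ℂ) * ((y : ℂ) - x) ^ ((c + 1 : ℝ) - 1 : ℂ) := by
        rw [← intervalIntegral.integral_ofReal]
        refine intervalIntegral.integral_congr fun x hx => ?_
        rw [Set.uIcc_of_le hy.le] at hx
        simp only [Complex.ofReal_mul, Complex.ofReal_cpow hx.1,
          Complex.ofReal_cpow (sub_nonneg.mpr hx.2), Complex.ofReal_sub]
        push_cast
        ring_nf
    _ = _ := by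
        rw [hbeta, ← Complex.ofReal_add, Complex.Gamma_ofReal, Complex.Gamma_ofReal,
          Complex.Gamma_ofReal]
        push_cast
        rw [Complex.ofReal_cpow hy.le]
        push_cast
        ring_nf

lemma w_one_sub_mul_w_one_eq_indicator (a c y : ℝ) :
    (fun x => w c 1 (y - x) * w a 1 x)
      = (Set.Ioo 0 y).indicator fun x =>
          x ^ a * (y - x) ^ c * (exp (-y) / (Gamma (a + 1) * Gamma (c + 1))) := by
  funext x
  by_cases hx : 0 < x
  · by_cases hxy : x < y
    · have hexp : exp (-(y - x)) * exp (-x) = exp (-y) := by rw [← exp_add]; ring_nf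
      simp only [w, if_pos hx, if_pos (sub_pos.mpr hxy), one_rpow, one_mul,
        Set.indicator_of_mem (show x ∈ Set.Ioo 0 y from ⟨hx, hxy⟩), ← hexp]
      ring
    · simp [w, hxy]
  · simp [w, hx]

lemma integral_w_one_sub_mul_w_one {a c : ℝ} (ha : -1 < a) (hc : -1 < c) (y : ℝ) :
    ∫ x, w c 1 (y - x) * w a 1 x = w (a + c + 1) 1 y := by
  rw [w_one_sub_mul_w_one_eq_indicator, integral_indicator measurableSet_Ioo, integral_mul_const]
  by_cases hy : 0 < y
  · rw [← integral_Ioc_eq_integral_Ioo, ← intervalIntegral.integral_of_le hy.le,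
      integral_rpow_mul_sub_rpow ha hc hy]
    have h1 := (Gamma_pos_of_pos (by linarith : 0 < a + 1)).ne'
    have h2 := (Gamma_pos_of_pos (by linarith : 0 < c + 1)).ne'
    simp only [w, if_pos hy, one_rpow, one_mul, show a + c + 1 + 1 = a + c + 2 by ring]
    field_simp
  · simp [w, hy]

lemma integrable_w_one_sub_mul_w_one {a c : ℝ} (ha : -1 < a) (hc : -1 < c) (y : ℝ) :
    Integrable fun x => w c 1 (y - x) * w a 1 x := by
  by_cases hy : 0 < y
  · -- the integral was computed without any integrability argument, and it is nonzero
    refine Integrable.of_integral_ne_zero ?_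
    rw [integral_w_one_sub_mul_w_one ha hc]
    have := Gamma_pos_of_pos (by linarith : 0 < a + c + 1 + 1)
    simp only [w, if_pos hy]
    positivity
  · rw [w_one_sub_mul_w_one_eq_indicator, Set.Ioo_eq_empty hy, Set.indicator_empty]
    exact integrable_zero _ _ _

lemma Lag_eq_sum_choose (a : ℝ) (n : ℕ) (x : ℝ) :
    Lag a n x = ∑ i ∈ range (n + 1),
      (-1) ^ (n - i) * (n.choose i : ℝ) * (Gamma (a + n + 1) / Gamma (a + i + 1)) * x ^ i := by
  refine sum_congr rfl fun i hi => ?_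
  rw [Nat.cast_choose ℝ (mem_range_succ_iff.mp hi)]
  field_simp

lemma integrable_Lag_mul_w_one {b : ℝ} (hb : -1 < b) (a : ℝ) (n : ℕ) :
    Integrable fun y => Lag a n y * w b 1 y := by
  simp_rw [Lag_eq_sum_choose, sum_mul, mul_assoc _ (_ ^ _)]
  exact integrable_finsetSum _ fun m _ => (integrable_pow_mul_w_one hb m).const_mul _

lemma integral_Lag_mul_w_one {b : ℝ} (hb : -1 < b) (a : ℝ) (n : ℕ) :
    ∫ y, Lag a n y * w b 1 y = ∑ m ∈ range (n + 1),
      (-1) ^ (n - m) * (n.choose m : ℝ) * (Gamma (a + n + 1) / Gamma (a + m + 1))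
        * (Gamma (b + m + 1) / Gamma (b + 1)) := by
  simp_rw [Lag_eq_sum_choose, sum_mul, mul_assoc _ (_ ^ _)]
  rw [integral_finsetSum _ fun m _ => (integrable_pow_mul_w_one hb m).const_mul _]
  simp_rw [integral_const_mul, integral_pow_mul_w_one hb]

lemma integral_w_one_sub_mul_Lag_mul_w_one {a c : ℝ} (ha : -1 < a) (hc : -1 < c) (n : ℕ)
    (y : ℝ) :
    ∫ x, w c 1 (y - x) * Lag a n x * w a 1 x = ∑ j ∈ range (n + 1),
      (-1) ^ (n - j) * (n.choose j : ℝ) * (Gamma (a + n + 1) / Gamma (a + 1))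
        * w (a + c + 1 + j) 1 y := by
  have hterm : ∀ x, w c 1 (y - x) * Lag a n x * w a 1 x = ∑ j ∈ range (n + 1),
      (-1) ^ (n - j) * (n.choose j : ℝ) * (Gamma (a + n + 1) / Gamma (a + 1))
        * (w c 1 (y - x) * w (a + j) 1 x) := fun x => by
    rw [Lag_eq_sum_choose, mul_sum, sum_mul]
    refine sum_congr rfl fun j _ => ?_
    have hΓ := (Gamma_pos_of_pos (by linarith [j.cast_nonneg (α := ℝ)] : 0 < a + j + 1)).ne'
    calc _ = (-1) ^ (n - j) * (n.choose j : ℝ) * (Gamma (a + n + 1) / Gamma (a + j + 1))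
          * w c 1 (y - x) * (x ^ j * w a 1 x) := by ring
      _ = _ := by rw [pow_mul_w_one ha]; field_simp
  have hj : ∀ j : ℕ, -1 < a + j := fun j => by linarith [j.cast_nonneg (α := ℝ)]
  simp_rw [hterm]
  rw [integral_finsetSum _ fun j _ => (integrable_w_one_sub_mul_w_one (hj j) hc y).const_mul _]
  refine sum_congr rfl fun j _ => ?_
  rw [integral_const_mul, integral_w_one_sub_mul_w_one (hj j) hc,
    show a + j + c + 1 = a + c + 1 + j by ring]

theorem integral_integral_Lag_mul_w_one {a c : ℝ} (ha : -1 < a) (hc : -1 < c) (k l : ℕ) :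
    ∫ y, ∫ x, Lag (a + c + 1) k y * w c 1 (y - x) * Lag a l x * w a 1 x
      = if k = l then (l ! : ℝ) * Gamma (a + l + 1) / Gamma (a + 1) else 0 := by
  set b := a + c + 1
  have hb : -1 < b := by linarith
  have hbj : ∀ j : ℕ, -1 < b + j := fun j => by linarith [j.cast_nonneg (α := ℝ)]
  have inner : ∀ y, ∫ x, Lag b k y * w c 1 (y - x) * Lag a l x * w a 1 x
      = ∑ j ∈ range (l + 1), (-1) ^ (l - j) * (l.choose j : ℝ)
          * (Gamma (a + l + 1) / Gamma (a + 1)) * (Lag b k y * w (b + j) 1 y) := fun y => by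
    simp_rw [mul_assoc (Lag b k y)]
    rw [integral_const_mul, integral_w_one_sub_mul_Lag_mul_w_one ha hc, mul_sum]
    exact sum_congr rfl fun j _ => by ring
  simp_rw [inner]
  rw [integral_finsetSum _ fun j _ => (integrable_Lag_mul_w_one (hbj j) b k).const_mul _]
  calc _ = Gamma (a + l + 1) / Gamma (a + 1) * Gamma (b + k + 1) * alternatingGammaSum b k l := by
        rw [alternatingGammaSum, mul_sum]
        refine sum_congr rfl fun j _ => ?_
        rw [integral_const_mul, integral_Lag_mul_w_one (hbj j), mul_sum, mul_sum]
        exact sum_congr rfl fun m _ => by ring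
    _ = _ := by
        rw [alternatingGammaSum_eq hb]
        split_ifs with hkl
        · subst hkl
          have := (Gamma_pos_of_pos (by linarith [k.cast_nonneg (α := ℝ)] : 0 < b + k + 1)).ne'
          field_simp
        · rw [mul_zero]

/-- The monic Laguerre polynomials `L̃_k^{N(t-1)}` and `L̃_ℓ^{N(s-1)}` are
bi-orthogonal with respect to the pairing
`(p,q) ↦ ∫∫ p(y) κ_{t-s}(y-x) q(x) w_{N(s-1),1}(x) dx dy`, with squared norms
`h_ℓ^{(t,s)} = ℓ! Γ(N(s-1)+ℓ+1)/Γ(N(s-1)+1)`. -/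
theorem laguerre_biorthogonal (N : ℕ) (hN : 0 < N) (t s : ℕ) (hs : 0 < s) (hst : s < t)
    (k l : ℕ) :
    (∫ y : ℝ, ∫ x : ℝ,
        Lag ((N : ℝ) * ((t : ℝ) - 1)) k y * kappa N ((t : ℝ) - s) (y - x)
          * Lag ((N : ℝ) * ((s : ℝ) - 1)) l x * w ((N : ℝ) * ((s : ℝ) - 1)) 1 x)
      = if k = l then
          (l.factorial : ℝ) * Real.Gamma ((N : ℝ) * ((s : ℝ) - 1) + l + 1)
            / Real.Gamma ((N : ℝ) * ((s : ℝ) - 1) + 1)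
        else 0 := by
  have hN1 : (1 : ℝ) ≤ N := by exact_mod_cast hN
  have hs1 : (1 : ℝ) ≤ s := by exact_mod_cast hs
  have hts : (s : ℝ) + 1 ≤ t := by exact_mod_cast hst
  have ha : -1 < (N : ℝ) * ((s : ℝ) - 1) := by nlinarith
  have hc : -1 < (N : ℝ) * ((t : ℝ) - s) - 1 := by nlinarith
  have hindex : (N : ℝ) * ((s : ℝ) - 1) + ((N : ℝ) * ((t : ℝ) - s) - 1) + 1
      = (N : ℝ) * ((t : ℝ) - 1) := by ring
  have h := integral_integral_Lag_mul_w_one ha hc k l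
  rw [hindex] at h
  exact h
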